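/- arXiv:1802.03719 — 4 statements merged into one kernel-verified Lean document; each statement's English description precedes it below -/
import Mathlib

section
/- There exists a unique formal power series D over ℚ with D(0) = 0 satisfying the functional equation D = z² + D²/(z - D), interpreted as the polynomial identity D·(z - D) = z²·(z - D) + D², equivalently 2D² - (z + z²)D + z³ = 0, together with the normalization that the coefficient of z is 0. -/
/-!
Uniqueness: if `D` and `E` are two solutions then `(D - E) * (2 * (D + E) - X - X²) = 0`, and the
second factor has `z`-coefficient `-1`, so it is nonzero in the domain `ℚ⟦X⟧`.

Existence: `D = X² (1 + L) / 2`, where `L` is the large Schröder series, solves the equation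
because `L = 1 + X L + X L²`; `D / X²` is the small Schröder series.
-/

open PowerSeries

namespace PowerSeries

variable {R : Type*}

theorem eq_of_coeff_one_eq_zero_of_quadratic_eq [CommRing R] [IsDomain R] {D E : R⟦X⟧}
    (hD₁ : coeff 1 D = 0) (hE₁ : coeff 1 E = 0)
    (hD : 2 * D ^ 2 - (X + X ^ 2) * D + X ^ 3 = 0)
    (hE : 2 * E ^ 2 - (X + X ^ 2) * E + X ^ 3 = 0) : D = E := by
  have hfactor : (D - E) * (2 * (D + E) - (X + X ^ 2)) = 0 := by linear_combination hD - hE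
  have hne : 2 * (D + E) - (X + X ^ 2) ≠ 0 := fun h => by
    simpa [two_mul, hD₁, hE₁, coeff_X_pow] using congrArg (coeff 1) h
  exact sub_eq_zero.mp ((mul_eq_zero.mp hfactor).resolve_right hne)

theorem map_largeSchroderSeries_eq [CommSemiring R] :
    map (Nat.castRingHom R) largeSchroderSeries =
      1 + X * map (Nat.castRingHom R) largeSchroderSeries +
        X * map (Nat.castRingHom R) largeSchroderSeries ^ 2 := by
  simpa using congrArg (map (Nat.castRingHom R))
    largeSchroderSeries_eq_one_add_X_mul_largeSchroderSeries_add_X_mul_largeSchroderSeries_sq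

variable (R) [CommRing R] [Invertible (2 : R)]

noncomputable def dissectionSeries : R⟦X⟧ :=
  X ^ 2 * (C (⅟2 : R) * (1 + map (Nat.castRingHom R) largeSchroderSeries))

theorem coeff_dissectionSeries_of_lt_two {n : ℕ} (hn : n < 2) :
    coeff n (dissectionSeries R) = 0 := by
  rw [dissectionSeries, coeff_X_pow_mul', if_neg (by omega)]

theorem dissectionSeries_quadratic_eq :
    2 * dissectionSeries R ^ 2 - (X + X ^ 2) * dissectionSeries R + X ^ 3 = 0 := by
  have hL := map_largeSchroderSeries_eq (R := R)
  have hhalf : C (⅟2 : R) * 2 = 1 := by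
    rw [← map_ofNat C 2, ← map_mul, invOf_mul_self, map_one]
  set L := map (Nat.castRingHom R) largeSchroderSeries
  set c := C (⅟2 : R)
  rw [dissectionSeries]
  -- at `c = 1/2` the left side is `-(X³ / 2) * (L - 1 - X L - X L²)`
  linear_combination (-X ^ 3 * c) * hL + (c * X ^ 4 * (1 + L) ^ 2 - X ^ 3) * hhalf

end PowerSeries

/-- There exists a unique formal power series `D` over `ℚ` with `D(0) = 0` and coefficient of
`z` equal to `0` satisfying `2D² - (z + z²)D + z³ = 0`. -/
theorem dissection_gf_unique :
    ∃! D : PowerSeries ℚ,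
      PowerSeries.constantCoeff D = 0 ∧
      PowerSeries.coeff 1 D = 0 ∧
      (2 : PowerSeries ℚ) * D ^ 2 - (X + X ^ 2) * D + X ^ 3 = 0 := by
  have hcoeff₀ := coeff_dissectionSeries_of_lt_two ℚ (n := 0) (by norm_num)
  have hcoeff₁ := coeff_dissectionSeries_of_lt_two ℚ (n := 1) (by norm_num)
  refine ⟨dissectionSeries ℚ, ⟨?_, hcoeff₁, dissectionSeries_quadratic_eq ℚ⟩, ?_⟩
  · rwa [← coeff_zero_eq_constantCoeff_apply]
  · rintro E ⟨-, hE₁, hE⟩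
    exact eq_of_coeff_one_eq_zero_of_quadratic_eq hE₁ hcoeff₁ hE (dissectionSeries_quadratic_eq ℚ)
end

section
/- There exists a unique formal power series y over ℚ with y(0) = 0 satisfying the cubic equation y = y³ + y² - z·y + z, and its initial coefficients are [z¹]y = 1, [z²]y = 0, [z³]y = 1, [z⁴]y = 1, [z⁵]y = 4, [z⁶]y = 8, [z⁷]y = 25. -/
/-!
Substituting `y = X * u` absorbs the condition `y(0) = 0` and turns the cubic into the
fixed-point equation `u = 1 + X * (u² - u + X * u³)`. The right-hand side is a contraction for the
`X`-adic distance: if `u ≡ v mod X ^ n` then the images agree mod `X ^ (n + 1)`. Hence it has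
exactly one fixed point, the `X`-adic limit of its iterates, and any polynomial solving the
equation modulo `X ^ n` agrees with that fixed point modulo `X ^ n`; checking
`1 + X² + X³ + 4X⁴ + 8X⁵ + 25X⁶` modulo `X ^ 7` gives the coefficients.
-/

open PowerSeries Function

namespace PowerSeries

variable {R : Type*} [CommRing R]

theorem eq_of_forall_X_pow_dvd_sub {φ ψ : R⟦X⟧} (h : ∀ n, X ^ n ∣ φ - ψ) : φ = ψ := by
  ext n
  have hn := X_pow_dvd_iff.mp (h (n + 1)) n n.lt_succ_self
  rwa [map_sub, sub_eq_zero] at hn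

theorem exists_forall_X_pow_dvd_sub_of_cauchy {s : ℕ → R⟦X⟧}
    (hs : ∀ m j, X ^ m ∣ s (m + j) - s m) : ∃ φ, ∀ m, X ^ m ∣ φ - s m := by
  refine ⟨mk fun k => coeff k (s (k + 1)), fun m => X_pow_dvd_iff.mpr fun k hk => ?_⟩
  obtain ⟨j, rfl⟩ := Nat.exists_eq_add_of_le (Nat.succ_le_of_lt hk)
  have hkj := X_pow_dvd_iff.mp (hs (k + 1) j) k k.lt_succ_self
  rw [map_sub, sub_eq_zero] at hkj
  rw [map_sub, coeff_mk, hkj, sub_self]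

def IsXAdicContraction (F : R⟦X⟧ → R⟦X⟧) : Prop :=
  ∀ n φ ψ, X ^ n ∣ φ - ψ → X ^ (n + 1) ∣ F φ - F ψ

namespace IsXAdicContraction

variable {F : R⟦X⟧ → R⟦X⟧}

theorem X_pow_dvd_sub_of_isFixedPt (hF : IsXAdicContraction F) {φ p : R⟦X⟧}
    (hφ : IsFixedPt F φ) :
    ∀ n, X ^ n ∣ F p - p → X ^ n ∣ φ - p
  | 0, _ => by simp
  | n + 1, hp => by
    have hFφ := hF n φ p
      (X_pow_dvd_sub_of_isFixedPt hF hφ n ((pow_dvd_pow X n.le_succ).trans hp))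
    rw [hφ.eq] at hFφ
    simpa only [sub_add_sub_cancel] using dvd_add hFφ hp

theorem eq_of_isFixedPt (hF : IsXAdicContraction F) {φ ψ : R⟦X⟧}
    (hφ : IsFixedPt F φ) (hψ : IsFixedPt F ψ) : φ = ψ :=
  eq_of_forall_X_pow_dvd_sub fun n =>
    hF.X_pow_dvd_sub_of_isFixedPt hφ n (by rw [hψ.eq, sub_self]; exact dvd_zero _)

theorem X_pow_dvd_iterate_add_sub (hF : IsXAdicContraction F) (φ : R⟦X⟧) :
    ∀ m j, X ^ m ∣ F^[m + j] φ - F^[m] φ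
  | 0, _ => by simp
  | m + 1, j => by
    rw [add_right_comm, iterate_succ_apply', iterate_succ_apply']
    exact hF m _ _ (X_pow_dvd_iterate_add_sub hF φ m j)

theorem exists_isFixedPt (hF : IsXAdicContraction F) : ∃ φ, IsFixedPt F φ := by
  obtain ⟨φ, hφ⟩ :=
    exists_forall_X_pow_dvd_sub_of_cauchy (s := (F^[·] 0)) (hF.X_pow_dvd_iterate_add_sub 0)
  refine ⟨φ, eq_of_forall_X_pow_dvd_sub fun n => (pow_dvd_pow X n.le_succ).trans ?_⟩
  have hFφ := hF n _ _ (hφ n)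
  have hφ' := hφ (n + 1)
  rw [iterate_succ_apply'] at hφ'
  simpa only [sub_sub_sub_cancel_right] using dvd_sub hFφ hφ'

end IsXAdicContraction

end PowerSeries

section

variable {R : Type*} [CommRing R]

noncomputable def dissectionMap (u : R⟦X⟧) : R⟦X⟧ :=
  1 + X * (u ^ 2 - u + X * u ^ 3)

theorem isXAdicContraction_dissectionMap : IsXAdicContraction (dissectionMap (R := R)) := by
  intro n u v h
  have hdiff : dissectionMap u - dissectionMap v
      = X * ((u - v) * (u + v - 1 + X * (u ^ 2 + u * v + v ^ 2))) := by
    unfold dissectionMap; ring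
  rw [hdiff, pow_succ']
  exact mul_dvd_mul_left X (h.mul_right _)

theorem X_mul_eq_cubic_iff_isFixedPt (u : R⟦X⟧) :
    X * u = (X * u) ^ 3 + (X * u) ^ 2 - X * (X * u) + X ↔ IsFixedPt dissectionMap u := by
  have hcubic : (X * u) ^ 3 + (X * u) ^ 2 - X * (X * u) + X = X * dissectionMap u := by
    unfold dissectionMap; ring
  rw [hcubic, X_mul_inj, eq_comm]
  rfl

theorem cubic_iff_eq_X_mul_of_isFixedPt {u : R⟦X⟧} (hu : IsFixedPt dissectionMap u)
    (y : R⟦X⟧) : (constantCoeff y = 0 ∧ y = y ^ 3 + y ^ 2 - X * y + X) ↔ y = X * u := by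
  constructor
  · rintro ⟨hy0, hy⟩
    obtain ⟨v, rfl⟩ := X_dvd_iff.mpr hy0
    rw [isXAdicContraction_dissectionMap.eq_of_isFixedPt
      ((X_mul_eq_cubic_iff_isFixedPt v).mp hy) hu]
  · rintro rfl
    exact ⟨by simp, (X_mul_eq_cubic_iff_isFixedPt u).mpr hu⟩

theorem coeff_eq_of_isFixedPt_dissectionMap {u : R⟦X⟧} (hu : IsFixedPt dissectionMap u)
    {k : ℕ} (hk : k < 7) :
    coeff k u = coeff k (1 + X ^ 2 + X ^ 3 + 4 * X ^ 4 + 8 * X ^ 5 + 25 * X ^ 6 : R⟦X⟧) := by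
  have happrox : X ^ 7 ∣ u - (1 + X ^ 2 + X ^ 3 + 4 * X ^ 4 + 8 * X ^ 5 + 25 * X ^ 6) := by
    refine isXAdicContraction_dissectionMap.X_pow_dvd_sub_of_isFixedPt hu 7
      ⟨64 + 127 * X + 157 * X ^ 2 + 375 * X ^ 3 + 655 * X ^ 4 + 1375 * X ^ 5 + 2239 * X ^ 6
        + 2998 * X ^ 7 + 2376 * X ^ 8 + 5043 * X ^ 9 + 7187 * X ^ 10 + 12300 * X ^ 11
        + 15000 * X ^ 12 + 15625 * X ^ 13, ?_⟩
    unfold dissectionMap; ring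
  rw [← sub_eq_zero, ← map_sub]
  exact X_pow_dvd_iff.mp happrox k hk

end

/-- There exists a unique formal power series `y` over `ℚ` with `y(0) = 0` satisfying
`y = y³ + y² - z·y + z`, and its initial coefficients are `1, 0, 1, 1, 4, 8, 25`
(for `z¹` through `z⁷`).  This is the generating function of triangle-free polygon
dissections. -/
theorem triangle_free_dissections :
    (∃! y : PowerSeries ℚ,
        PowerSeries.constantCoeff y = 0 ∧ y = y ^ 3 + y ^ 2 - X * y + X) ∧
    (∀ y : PowerSeries ℚ,
        PowerSeries.constantCoeff y = 0 → y = y ^ 3 + y ^ 2 - X * y + X →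
        PowerSeries.coeff 1 y = 1 ∧
        PowerSeries.coeff 2 y = 0 ∧
        PowerSeries.coeff 3 y = 1 ∧
        PowerSeries.coeff 4 y = 1 ∧
        PowerSeries.coeff 5 y = 4 ∧
        PowerSeries.coeff 6 y = 8 ∧
        PowerSeries.coeff 7 y = 25) := by
  obtain ⟨u, hu⟩ := isXAdicContraction_dissectionMap.exists_isFixedPt (R := ℚ)
  have solution_iff := cubic_iff_eq_X_mul_of_isFixedPt hu
  refine ⟨⟨X * u, (solution_iff _).mpr rfl, fun y hy => (solution_iff y).mp hy⟩,
    fun y hy0 hy => ?_⟩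
  obtain rfl := (solution_iff y).mp ⟨hy0, hy⟩
  simp only [coeff_succ_X_mul, coeff_eq_of_isFixedPt_dissectionMap hu, Nat.reduceLT]
  simp [← map_ofNat C, coeff_X_pow, coeff_one]
end

section
/- There exist unique formal power series y and y₀ over ℚ, both with constant term 0, satisfying the system y = y₀ + y₀² and y₀ = y⁴ + y·y₀ - z·y + z, and the initial coefficients of y are 1, 1, 0, 1, 7, 22, 49 (for z¹ through z⁷). -/
/-!
Substituting `y = y₀ + y₀²` reduces the system to the fixed-point equation `y₀ = Φ(y₀)` with
`Φ(w) = (w + w²)⁴ + (w + w²)·w - X·(w + w²) + X`. On series without constant term, `Φ u - Φ v`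
is `u - v` times a series without constant term, so `Φ` raises the `X`-adic order of differences
by one: its iterates from `0` converge to a unique fixed point, and any series `p` with
`Φ p ≡ p (mod X⁸)` agrees with it modulo `X⁸`. Checking this for
`p = X + X⁴ + 5X⁵ + 12X⁶ + 25X⁷` gives `y ≡ p + p² ≡ X + X² + X⁴ + 7X⁵ + 22X⁶ + 49X⁷`.
-/

open PowerSeries Function

namespace PowerSeries

section Ring

variable {R : Type*} [Ring R]

theorem eq_zero_of_forall_X_pow_dvd {φ : R⟦X⟧} (h : ∀ n, X ^ n ∣ φ) : φ = 0 := by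
  ext n
  exact X_pow_dvd_iff.mp (h (n + 1)) n n.lt_succ_self

theorem coeff_eq_of_X_pow_dvd_sub {φ ψ : R⟦X⟧} {n k : ℕ} (h : X ^ n ∣ φ - ψ) (hk : k < n) :
    coeff k φ = coeff k ψ :=
  sub_eq_zero.mp (by rw [← map_sub]; exact X_pow_dvd_iff.mp h k hk)

theorem coeff_ofNat_mul (k a : ℕ) [a.AtLeastTwo] (φ : R⟦X⟧) :
    coeff k ((ofNat(a) : R⟦X⟧) * φ) = ofNat(a) * coeff k φ := by
  rw [← map_ofNat C a, coeff_C_mul]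

structure IsXAdicContraction_s6 (F : R⟦X⟧ → R⟦X⟧) : Prop where
  constantCoeff_eq_zero ⦃u : R⟦X⟧⦄ : constantCoeff u = 0 → constantCoeff (F u) = 0
  X_pow_succ_dvd_sub ⦃n : ℕ⦄ ⦃u v : R⟦X⟧⦄ : constantCoeff u = 0 → constantCoeff v = 0 →
    X ^ n ∣ u - v → X ^ (n + 1) ∣ F u - F v

namespace IsXAdicContraction_s6

variable {F : R⟦X⟧ → R⟦X⟧} (hF : IsXAdicContraction_s6 F)
include hF

theorem X_pow_dvd_sub_of_isFixedPt_s6 {u p : R⟦X⟧} {N : ℕ} (hu : constantCoeff u = 0)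
    (hp : constantCoeff p = 0) (hfix : IsFixedPt F u) (happrox : X ^ N ∣ F p - p) :
    X ^ N ∣ u - p := by
  suffices ∀ k ≤ N, X ^ k ∣ u - p from this N le_rfl
  intro k hk
  induction k with
  | zero => simp
  | succ k ih =>
    have h₁ : X ^ (k + 1) ∣ u - F p := hfix ▸ hF.X_pow_succ_dvd_sub hu hp (ih (by omega))
    have h₂ : X ^ (k + 1) ∣ F p - p := (pow_dvd_pow X hk).trans happrox
    simpa using dvd_add h₁ h₂

theorem eq_of_isFixedPt_s6 {u v : R⟦X⟧} (hu : constantCoeff u = 0) (hv : constantCoeff v = 0)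
    (hFu : IsFixedPt F u) (hFv : IsFixedPt F v) : u = v :=
  sub_eq_zero.mp <| eq_zero_of_forall_X_pow_dvd fun _ ↦
    hF.X_pow_dvd_sub_of_isFixedPt_s6 hu hv hFu (by rw [hFv.eq, sub_self]; exact dvd_zero _)

theorem constantCoeff_iterate (n : ℕ) : constantCoeff (F^[n] 0) = 0 := by
  induction n with
  | zero => simp
  | succ n ih => rw [iterate_succ_apply']; exact hF.constantCoeff_eq_zero ih

theorem X_pow_dvd_iterate_sub {n m : ℕ} (h : n ≤ m) : X ^ n ∣ F^[m] 0 - F^[n] 0 := by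
  induction n generalizing m with
  | zero => simp
  | succ n ih =>
    obtain ⟨m, rfl⟩ := Nat.exists_eq_add_of_le' (n.succ_pos.trans_le h)
    rw [iterate_succ_apply', iterate_succ_apply']
    exact hF.X_pow_succ_dvd_sub (hF.constantCoeff_iterate m) (hF.constantCoeff_iterate n)
      (ih (by omega))

theorem exists_isFixedPt_s6 : ∃ u : R⟦X⟧, constantCoeff u = 0 ∧ IsFixedPt F u := by
  set u : R⟦X⟧ := PowerSeries.mk fun k ↦ coeff k (F^[k + 1] 0)
  have hu : ∀ n, X ^ n ∣ u - F^[n] 0 := fun n ↦ X_pow_dvd_iff.mpr fun k hk ↦ by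
    rw [map_sub, coeff_mk, coeff_eq_of_X_pow_dvd_sub (hF.X_pow_dvd_iterate_sub hk) k.lt_succ_self,
      sub_self]
  have hu₀ : constantCoeff u = 0 := by
    rw [← coeff_zero_eq_constantCoeff_apply, coeff_mk, coeff_zero_eq_constantCoeff_apply]
    exact hF.constantCoeff_iterate 1
  refine ⟨u, hu₀, sub_eq_zero.mp <| eq_zero_of_forall_X_pow_dvd fun n ↦ ?_⟩
  have h₁ : X ^ (n + 1) ∣ F u - F^[n + 1] 0 := by
    rw [iterate_succ_apply']
    exact hF.X_pow_succ_dvd_sub hu₀ (hF.constantCoeff_iterate n) (hu n)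
  have h₂ : X ^ (n + 1) ∣ F^[n + 1] 0 - u := dvd_sub_comm.mp (hu (n + 1))
  exact (pow_dvd_pow X n.le_succ).trans (by simpa using dvd_add h₁ h₂)

end IsXAdicContraction_s6

end Ring

section CommRing

variable {R : Type*} [CommRing R]

noncomputable def dissectionStep (w : R⟦X⟧) : R⟦X⟧ :=
  (w + w ^ 2) ^ 4 + (w + w ^ 2) * w - X * (w + w ^ 2) + X

theorem isXAdicContraction_dissectionStep : IsXAdicContraction_s6 (dissectionStep (R := R)) where
  constantCoeff_eq_zero u hu := by simp [dissectionStep, hu]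
  X_pow_succ_dvd_sub n u v hu hv h := by
    have hfactor : dissectionStep u - dissectionStep v = (u - v) *
        ((1 + u + v) * ((u + u ^ 2) ^ 3 + (u + u ^ 2) ^ 2 * (v + v ^ 2) +
          (u + u ^ 2) * (v + v ^ 2) ^ 2 + (v + v ^ 2) ^ 3 + v - X) + (u + u ^ 2)) := by
      unfold dissectionStep; ring
    rw [hfactor, pow_succ]
    exact mul_dvd_mul h (X_dvd_iff.mpr (by simp [hu, hv]))

end CommRing

theorem X_pow_eight_dvd_dissectionStep_sub :
    (X : ℚ⟦X⟧) ^ 8 ∣ dissectionStep (X + X ^ 4 + 5 * X ^ 5 + 12 * X ^ 6 + 25 * X ^ 7) -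
      (X + X ^ 4 + 5 * X ^ 5 + 12 * X ^ 6 + 25 * X ^ 7) := by
  unfold dissectionStep
  -- after expansion, every monomial left has degree at least `8`
  ring_nf
  repeat' apply dvd_add
  all_goals exact dvd_mul_of_dvd_left (pow_dvd_pow X (by norm_num)) _

theorem X_pow_eight_dvd_add_sq_sub :
    (X : ℚ⟦X⟧) ^ 8 ∣ (X + X ^ 4 + 5 * X ^ 5 + 12 * X ^ 6 + 25 * X ^ 7) +
      (X + X ^ 4 + 5 * X ^ 5 + 12 * X ^ 6 + 25 * X ^ 7) ^ 2 -
      (X + X ^ 2 + X ^ 4 + 7 * X ^ 5 + 22 * X ^ 6 + 49 * X ^ 7) := by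
  ring_nf
  repeat' apply dvd_add
  all_goals exact dvd_mul_of_dvd_left (pow_dvd_pow X (by norm_num)) _

theorem X_pow_eight_dvd_add_sq_sub_of_isFixedPt {w : ℚ⟦X⟧} (hw : constantCoeff w = 0)
    (hfix : IsFixedPt dissectionStep w) :
    X ^ 8 ∣ w + w ^ 2 - (X + X ^ 2 + X ^ 4 + 7 * X ^ 5 + 22 * X ^ 6 + 49 * X ^ 7) := by
  set p : ℚ⟦X⟧ := X + X ^ 4 + 5 * X ^ 5 + 12 * X ^ 6 + 25 * X ^ 7
  set q : ℚ⟦X⟧ := X + X ^ 2 + X ^ 4 + 7 * X ^ 5 + 22 * X ^ 6 + 49 * X ^ 7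
  have hwp : X ^ 8 ∣ w - p := isXAdicContraction_dissectionStep.X_pow_dvd_sub_of_isFixedPt_s6 hw
    (by simp [p]) hfix X_pow_eight_dvd_dissectionStep_sub
  have hsplit : w + w ^ 2 - q = (w - p) * (1 + w + p) + (p + p ^ 2 - q) := by ring
  rw [hsplit]
  exact dvd_add (dvd_mul_of_dvd_left hwp _) X_pow_eight_dvd_add_sq_sub

end PowerSeries

/-- There exist unique formal power series `y` and `y₀` over `ℚ`, both with constant term 0,
satisfying `y = y₀ + y₀²` and `y₀ = y⁴ + y·y₀ - z·y + z`, and the initial coefficients of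
`y` are `1, 1, 0, 1, 7, 22, 49` (for `z¹` through `z⁷`).  This is the generating function of
polygon dissections avoiding 4-cycles as subgraphs. -/
theorem four_cycle_free_dissections :
    (∃! p : PowerSeries ℚ × PowerSeries ℚ,
        PowerSeries.constantCoeff p.1 = 0 ∧
        PowerSeries.constantCoeff p.2 = 0 ∧
        p.1 = p.2 + p.2 ^ 2 ∧
        p.2 = p.1 ^ 4 + p.1 * p.2 - X * p.1 + X) ∧
    (∀ y y₀ : PowerSeries ℚ,
        PowerSeries.constantCoeff y = 0 →
        PowerSeries.constantCoeff y₀ = 0 →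
        y = y₀ + y₀ ^ 2 →
        y₀ = y ^ 4 + y * y₀ - X * y + X →
        PowerSeries.coeff 1 y = 1 ∧
        PowerSeries.coeff 2 y = 1 ∧
        PowerSeries.coeff 3 y = 0 ∧
        PowerSeries.coeff 4 y = 1 ∧
        PowerSeries.coeff 5 y = 7 ∧
        PowerSeries.coeff 6 y = 22 ∧
        PowerSeries.coeff 7 y = 49) := by
  have hΦ := isXAdicContraction_dissectionStep (R := ℚ)
  constructor
  · obtain ⟨w, hw, hfix⟩ := hΦ.exists_isFixedPt_s6
    refine ⟨(w + w ^ 2, w), ⟨by simp [hw], hw, rfl, hfix.symm⟩, ?_⟩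
    rintro ⟨y, y₀⟩ ⟨-, hy₀, hy, h⟩
    dsimp only at hy₀ hy h
    subst hy
    obtain rfl := hΦ.eq_of_isFixedPt_s6 hy₀ hw h.symm hfix
    rfl
  · rintro y y₀ - hy₀ rfl h
    have hy := X_pow_eight_dvd_add_sq_sub_of_isFixedPt hy₀ h.symm
    refine ⟨?_, ?_, ?_, ?_, ?_, ?_, ?_⟩ <;>
      rw [coeff_eq_of_X_pow_dvd_sub hy (by norm_num)] <;>
      simp [coeff_X, coeff_X_pow, coeff_ofNat_mul]
end

section
/- Any 2-connected subgraph H (with at least 3 vertices) of a polygon dissection graph is outerplanar and has a Hamilton cycle; in particular, H is isomorphic to a polygon dissection graph. -/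
/-!
List the vertices of `H` in the order in which they appear around the polygon. The chords of `H`
stay pairwise non-crossing in this order, and in a 2-connected non-crossing graph two consecutive
vertices `i ⋖ j` are adjacent: otherwise, by connectivity, some edge `ab` jumps over the gap
(`a ≤ i`, `j ≤ b`), and for the innermost such edge one of `a`, `b` is a cut vertex, because no
chord can leave the region between that endpoint and the gap without crossing `ab`. Likewise the
farthest neighbour of the first vertex must be the last vertex. So the vertices of `H`, in order,
form a Hamilton cycle, and `H` is a dissection of the polygon on its own vertex set.
-/

/-- A graph is outerplanar if its vertices can be arranged on a circle so that edges, drawn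
as chords, are pairwise non-crossing. -/
def SimpleGraph.Outerplanar {V : Type*} (G : SimpleGraph V) : Prop :=
  ∃ (n : ℕ) (σ : V ≃ Fin n), ∀ a b c d : V, G.Adj a b → G.Adj c d →
    ¬(σ a < σ c ∧ σ c < σ b ∧ σ b < σ d)

/-- A graph is 2-connected if it has at least 3 vertices and deleting any single vertex
leaves a connected graph. -/
def SimpleGraph.TwoConnected {V : Type*} (G : SimpleGraph V) : Prop :=
  3 ≤ Nat.card V ∧ ∀ v : V, (G.induce {v}ᶜ).Connected

/-- A dissection of the convex `n`-gon, viewed as a graph on `Fin n`: it contains all the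
polygon edges `{i, i+1}` (indices mod `n`) and its edges are pairwise non-crossing chords. -/
def IsDissection (n : ℕ) (G : SimpleGraph (Fin n)) : Prop :=
  (∀ i : Fin n, G.Adj i ⟨((i : ℕ) + 1) % n, Nat.mod_lt _ i.pos⟩) ∧
  ∀ a b c d : Fin n, G.Adj a b → G.Adj c d → ¬(a < c ∧ c < b ∧ b < d)

open Set

theorem exists_innermost {α : Type*} [LinearOrder α] [Finite α] {P : α → α → Prop}
    (h : ∃ a b, P a b) : ∃ a b, P a b ∧ ∀ p q, P p q → a ≤ p → q ≤ b → p = a ∧ q = b := by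
  obtain ⟨a, b, hab⟩ := h
  obtain ⟨⟨a, b⟩, hmin⟩ := exists_minimal_of_wellFoundedLT
    (fun x : αᵒᵈ × α => P (OrderDual.ofDual x.1) x.2) ⟨(OrderDual.toDual a, b), hab⟩
  refine ⟨OrderDual.ofDual a, b, hmin.prop, fun p q hpq hap hqb => ?_⟩
  have := hmin.eq_of_le (y := (OrderDual.toDual p, q)) hpq ⟨hap, hqb⟩
  simp only [Prod.mk.injEq] at this
  exact ⟨congrArg OrderDual.ofDual this.1, this.2⟩

namespace SimpleGraph

variable {V W : Type*} {G : SimpleGraph V} {G' : SimpleGraph W}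

def NonCrossing [LT V] (G : SimpleGraph V) : Prop :=
  ∀ a b c d : V, G.Adj a b → G.Adj c d → ¬(a < c ∧ c < b ∧ b < d)

theorem NonCrossing.anti [LT V] {G₁ G₂ : SimpleGraph V} (h : G₁ ≤ G₂) (hG₂ : G₂.NonCrossing) :
    G₁.NonCrossing :=
  fun a b c d hab hcd => hG₂ a b c d (h hab) (h hcd)

theorem NonCrossing.comap [Preorder V] [Preorder W] {f : V → W} (hf : StrictMono f)
    (hG' : G'.NonCrossing) : (G'.comap f).NonCrossing :=
  fun _ _ _ _ hab hcd ⟨h₁, h₂, h₃⟩ => hG' _ _ _ _ hab hcd ⟨hf h₁, hf h₂, hf h₃⟩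

theorem NonCrossing.outerplanar [LinearOrder V] [Fintype V] (hG : G.NonCrossing) :
    G.Outerplanar := by
  let σ := (Fintype.orderIsoFinOfCardEq V rfl).symm
  exact ⟨_, σ.toEquiv, fun a b c d hab hcd ⟨h₁, h₂, h₃⟩ =>
    hG a b c d hab hcd ⟨σ.lt_iff_lt.1 h₁, σ.lt_iff_lt.1 h₂, σ.lt_iff_lt.1 h₃⟩⟩

theorem TwoConnected.iso (hG : G.TwoConnected) (e : G ≃g G') : G'.TwoConnected := by
  refine ⟨Nat.card_congr e.toEquiv ▸ hG.1, fun v => ?_⟩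
  have hbij : BijOn e {e.symm v}ᶜ {v}ᶜ := e.toEquiv.bijOn fun _ =>
    not_congr (e.toEquiv.eq_symm_apply).symm
  exact (Iso.connected_iff (e.induce hbij)).1 (hG.2 (e.symm v))

theorem IsHamiltonian.iso [Fintype V] [Fintype W] [DecidableEq V] [DecidableEq W]
    (hG : G.IsHamiltonian) (e : G ≃g G') : G'.IsHamiltonian := fun hW =>
  let ⟨a, p, hp⟩ := hG (by rwa [Fintype.card_congr e.toEquiv])
  ⟨e a, p.map e.toHom, hp.map e.toEquiv.bijective⟩

theorem exists_adj_of_connected_induce_compl {z x y : V} (h : (G.induce {z}ᶜ).Connected)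
    {M : Set V} (hx : x ∈ M) (hy : y ∉ M) (hxz : x ≠ z) (hyz : y ≠ z) :
    ∃ p ∈ M, ∃ q ∉ M, q ≠ z ∧ G.Adj p q := by
  obtain ⟨w⟩ := h.preconnected ⟨x, hxz⟩ ⟨y, hyz⟩
  obtain ⟨d, -, hp, hq⟩ := w.exists_boundary_dart (Subtype.val ⁻¹' M) hx hy
  exact ⟨_, hp, _, hq, d.snd.2, d.adj⟩

theorem TwoConnected.exists_ne_ne (h : G.TwoConnected) (x y : V) : ∃ z, z ≠ x ∧ z ≠ y := by
  by_contra! hxy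
  have : Nat.card V ≤ 2 := calc
    Nat.card V = (univ : Set V).ncard := (ncard_univ V).symm
    _ ≤ ({x, y} : Set V).ncard := ncard_le_ncard (fun z _ => or_iff_not_imp_left.2 (hxy z))
    _ ≤ ({y} : Set V).ncard + 1 := ncard_insert_le x {y}
    _ = 2 := by rw [ncard_singleton]
  exact absurd h.1 (by omega)

theorem NonCrossing.adj_of_covBy [LinearOrder V] [Finite V] (hG : G.NonCrossing)
    (h2 : G.TwoConnected) {i j : V} (hij : i ⋖ j) : G.Adj i j := by
  by_contra hne
  have hjump : ∃ a b, G.Adj a b ∧ a ≤ i ∧ j ≤ b := by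
    obtain ⟨z, hzi, hzj⟩ := h2.exists_ne_ne i j
    obtain ⟨p, hp, q, hq, -, hpq⟩ := exists_adj_of_connected_induce_compl (h2.2 z)
      (M := Iic i) le_rfl (not_le.2 hij.lt) hzi.symm hzj.symm
    exact ⟨p, q, hpq, hp, hij.ge_of_gt (not_le.1 hq)⟩
  obtain ⟨a, b, ⟨hab, hai, hjb⟩, hinner⟩ := exists_innermost hjump
  have hlt_b : ∀ {p}, a ≤ p → p ≤ i → p < b := fun _ hp => hp.trans_lt (hij.lt.trans_le hjb)
  rcases hai.lt_or_eq with hai | rfl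
  · obtain ⟨p, ⟨hap, hpi⟩, q, hq, hqa, hpq⟩ := exists_adj_of_connected_induce_compl (h2.2 a)
      (M := Ioc a i) ⟨hai, le_rfl⟩ (fun h => h.2.not_gt hij.lt) hai.ne' (hai.trans hij.lt).ne'
    rcases lt_trichotomy q a with hqa' | rfl | haq
    · exact hG q p a b hpq.symm hab ⟨hqa', hap, hlt_b hap.le hpi⟩
    · exact hqa rfl
    have hjq : j ≤ q := hij.ge_of_gt (not_le.1 fun hqi => hq ⟨haq, hqi⟩)
    rcases le_or_gt q b with hqb | hbq
    · exact hap.ne' (hinner p q ⟨hpq, hpi, hjq⟩ hap.le hqb).1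
    · exact hG a b p q hab hpq ⟨hap, hlt_b hap.le hpi, hbq⟩
  rcases hjb.lt_or_eq with hjb | rfl
  · obtain ⟨p, ⟨hjp, hpb⟩, q, hq, hqb, hpq⟩ := exists_adj_of_connected_induce_compl (h2.2 b)
      (M := Ico j b) ⟨le_rfl, hjb⟩ (fun h => h.1.not_gt hij.lt) hjb.ne (hij.lt.trans hjb).ne
    have hap : a < p := hij.lt.trans_le hjp
    rcases lt_trichotomy q b with hqb' | rfl | hbq
    · have hqa : q ≤ a := hij.le_of_lt (not_le.1 fun hjq => hq ⟨hjq, hqb'⟩)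
      rcases hqa.lt_or_eq with hqa | rfl
      · exact hG q p a b hpq.symm hab ⟨hqa, hap, hpb⟩
      · exact hpb.ne (hinner q p ⟨hpq.symm, le_rfl, hjp⟩ le_rfl hpb.le).2
    · exact hqb rfl
    · exact hG a b p q hab hpq ⟨hap, hpb, hbq⟩
  · exact hne hab

theorem NonCrossing.adj_of_isBot_of_isTop [LinearOrder V] [Finite V] (hG : G.NonCrossing)
    (h2 : G.TwoConnected) {a b : V} (ha : IsBot a) (hb : IsTop b) : G.Adj a b := by
  by_contra hne
  obtain ⟨z, hza, hzb⟩ := h2.exists_ne_ne a b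
  have hba : b ≠ a := fun h => hza ((ha z).antisymm' (h ▸ hb z))
  obtain ⟨p, hp, q, -, -, hpq⟩ := exists_adj_of_connected_induce_compl (h2.2 z)
    (M := {a}) rfl hba hza.symm hzb.symm
  have haq : G.Adj a q := mem_singleton_iff.1 hp ▸ hpq
  obtain ⟨c, hac, hcmax⟩ := exists_max_image {q | G.Adj a q} id (toFinite _) ⟨q, haq⟩
  have hca : a < c := (ha c).lt_of_ne (G.ne_of_adj hac)
  have hcb : c < b := (hb c).lt_of_ne fun h => hne (h ▸ hac)
  obtain ⟨p, hpc, q, hq, hqc, hpq⟩ := exists_adj_of_connected_induce_compl (h2.2 c)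
    (M := Iio c) hca (not_lt.2 hcb.le) hca.ne hcb.ne'
  have hcq : c < q := (not_lt.1 hq).lt_of_ne' hqc
  rcases (ha p).eq_or_lt with rfl | hap
  · exact (hcmax q hpq).not_gt hcq
  · exact hG a c p q hac hpq ⟨hap, hpc, hcq⟩

end SimpleGraph

open SimpleGraph

theorem isDissection_of_nonCrossing {m : ℕ} {D : SimpleGraph (Fin m)} (hD : D.NonCrossing)
    (h2 : D.TwoConnected) : IsDissection m D := by
  refine ⟨fun i => ?_, hD⟩
  rcases (Nat.succ_le_of_lt i.isLt).lt_or_eq with hi | hi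
  · have hsucc : (⟨(i + 1) % m, Nat.mod_lt _ i.pos⟩ : Fin m) = ⟨i + 1, hi⟩ :=
      Fin.ext (Nat.mod_eq_of_lt hi)
    rw [hsucc]
    exact hD.adj_of_covBy h2 ⟨Fin.lt_def.2 (Nat.lt_succ_self _), fun c h₁ h₂ => by
      rw [Fin.lt_def] at h₁ h₂; simp only at h₂; omega⟩
  · have hzero : (⟨(i + 1) % m, Nat.mod_lt _ i.pos⟩ : Fin m) = ⟨0, i.pos⟩ :=
      Fin.ext (by simp only [show (i : ℕ) + 1 = m from hi, Nat.mod_self])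
    rw [hzero]
    exact (hD.adj_of_isBot_of_isTop h2 (fun _ => Fin.le_def.2 (Nat.zero_le _)) fun c => by
      rw [Fin.le_def]; omega).symm

theorem IsDissection.isHamiltonian {m : ℕ} {D : SimpleGraph (Fin m)} (hD : IsDissection m D)
    (hm : 3 ≤ m) : D.IsHamiltonian := by
  obtain ⟨k, rfl⟩ : ∃ k, m = k + 3 := ⟨m - 3, by omega⟩
  have hsucc : ∀ i : Fin (k + 3), D.Adj i (i + 1) := fun i => by
    convert hD.1 i using 1
    ext
    simp [Fin.val_add]
  refine IsHamiltonian.mono (G := cycleGraph (k + 3)) (fun u v huv => ?_) fun _ =>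
    ⟨0, cycleGraph.cycle k, Walk.isHamiltonianCycle_iff_isCycle_and_length_eq.2
      ⟨cycleGraph.isCycle_cycle, by simp⟩⟩
  rcases cycleGraph_adj.1 huv with h | h
  · rw [sub_eq_iff_eq_add'] at h
    exact h ▸ hsucc v |>.symm
  · rw [sub_eq_iff_eq_add'] at h
    exact h ▸ hsucc u

theorem subgraph_of_dissection_general (n : ℕ) (G : SimpleGraph (Fin n)) (hG : IsDissection n G)
    (H : G.Subgraph) [Fintype H.verts] (h2 : H.coe.TwoConnected) :
    H.coe.Outerplanar ∧ H.coe.IsHamiltonian ∧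
      ∃ (m : ℕ) (D : SimpleGraph (Fin m)), IsDissection m D ∧ Nonempty (H.coe ≃g D) := by
  have hGnc : G.NonCrossing := hG.2
  have hH : H.coe.NonCrossing :=
    (hGnc.comap (Subtype.strictMono_coe _)).anti fun _ _ h => H.adj_sub h
  let σ := Fintype.orderIsoFinOfCardEq H.verts rfl
  let e : H.coe.comap σ ≃g H.coe := Iso.comap σ.toEquiv H.coe
  have hD : IsDissection _ (H.coe.comap σ) :=
    isDissection_of_nonCrossing (hH.comap σ.strictMono) (h2.iso e.symm)
  have hcard : 3 ≤ Fintype.card H.verts := Nat.card_eq_fintype_card (α := H.verts) ▸ h2.1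
  exact ⟨hH.outerplanar, (hD.isHamiltonian hcard).iso e, _, _, hD, ⟨e.symm⟩⟩

/-- Any 2-connected subgraph `H` (with at least 3 vertices) of a polygon dissection graph is
outerplanar and has a Hamilton cycle; in particular, `H` is isomorphic to a polygon
dissection graph. -/
theorem subgraph_of_dissection (n : ℕ) (G : SimpleGraph (Fin n)) (hG : IsDissection n G)
    (H : G.Subgraph) [Fintype H.verts]
    (hcard : 3 ≤ Nat.card H.verts) (h2 : H.coe.TwoConnected) :
    H.coe.Outerplanar ∧ H.coe.IsHamiltonian ∧
      ∃ (m : ℕ) (D : SimpleGraph (Fin m)), IsDissection m D ∧ Nonempty (H.coe ≃g D) :=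
  subgraph_of_dissection_general n G hG H h2
end
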